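/- Let H be a group of automorphisms of a graph Γ with vertex set V. Suppose there exist σ ∈ V, a σ-projection Π_σ on Γ, and a nonempty finite Π_σ-convex subset R ⊆ V which is H-invariant (hR = R for all h ∈ H). Then the subgraph of Γ induced on R is dismantlable and Γ contains an H-invariant clique. -/

import Mathlib

/-!
Dismantle `R` down to `σ`. In a set `σ ∈ S ⊆ R`, an exposed vertex `ρ ≠ σ` has, by convexity,
a `Π`-child `π ∈ R` with `N(ρ) ∩ S ⊆ N(π)`. If `π` was removed earlier, then at that time it
was dominated by one of its own children in `R`, and so on; acyclicity of `Π` makes this descent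
well founded on the finite set `R`, so it stops at a vertex of `S` other than `ρ` that dominates
`ρ` in `S`. The same descent along `Π`-children inside `R` shows `σ ∈ R`.

For the clique, removing any dominated vertex keeps a finite graph dismantlable (when the vertex
and the one removed first are twins, exchange them). So removing all strictly dominated vertices,
an `H`-invariant operation, leaves a smaller invariant dismantlable set, and a dismantlable set
without strictly dominated vertices is a clique.
-/

open SimpleGraph

variable {V : Type*}

/-- The closed neighbourhood of a vertex: the vertex together with all its neighbours. -/
def closedNbhd (G : SimpleGraph V) (ρ : V) : Set V := insert ρ {w | G.Adj ρ w}

/-- `ρ` is dominated by `π` within the subgraph of `G` induced on `S`: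
`π ∈ S`, `π ≠ ρ`, and `N(ρ) ∩ S ⊆ N(π)`. -/
def DominatedIn (G : SimpleGraph V) (S : Set V) (ρ π : V) : Prop :=
  π ∈ S ∧ π ≠ ρ ∧ ∀ w ∈ S, w ∈ closedNbhd G ρ → w ∈ closedNbhd G π

/-- The subgraph of `G` induced on `S` is dismantlable: the vertices of `S` can be
arranged in a (finite) list such that each vertex except the last is dominated in the
subgraph induced on it and the later vertices. -/
def DismantlableOn (G : SimpleGraph V) (S : Set V) : Prop :=
  ∃ l : List V, l.Nodup ∧ (∀ v, v ∈ l ↔ v ∈ S) ∧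
    ∀ (i : ℕ) (h : i < l.length), i < l.length - 1 →
      ∃ π, DominatedIn G {w | w ∈ l.drop i} (l[i]'h) π

/-- A graph is dismantlable if the subgraph induced on all of its vertices is. -/
def Dismantlable (G : SimpleGraph V) : Prop := DismantlableOn G Set.univ

/-- The set `Π*(ρ)` of all vertices appearing in pairs of `Π ρ`. -/
def PiStar (Pr : V → Finset (Sym2 V)) (ρ : V) : Set V := {v | ∃ p ∈ Pr ρ, v ∈ p}

/-- `Pr` is a `σ`-projection: it assigns to each vertex `ρ ≠ σ` a nonempty finite set of
unordered pairs of vertices such that (i) every finite set `R` containing a vertex other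
than `σ` has an exposed vertex, and (ii) there is no cycle `ρ₀, …, ρ_{m-1}` with
`ρ_{i+1} ∈ Π*(ρ_i)` (indices mod `m`). -/
structure IsSigmaProjection (G : SimpleGraph V) (σ : V) (Pr : V → Finset (Sym2 V)) : Prop where
  nonempty : ∀ ρ, ρ ≠ σ → (Pr ρ).Nonempty
  exposed : ∀ R : Finset V, (∃ ρ ∈ R, ρ ≠ σ) →
    ∃ ρ ∈ R, ρ ≠ σ ∧ ∃ p ∈ Pr ρ, ∀ π ∈ p,
      ∀ w ∈ R, w ∈ closedNbhd G ρ → w ∈ closedNbhd G π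
  acyclic : ¬ ∃ m : ℕ, 0 < m ∧ ∃ f : ZMod m → V,
    ∀ i, f i ≠ σ ∧ f (i + 1) ∈ PiStar Pr (f i)

/-- `R` is `Π`-convex: for every `ρ ∈ R` other than `σ`, each pair in `Π ρ` meets `R`. -/
def PiConvex (σ : V) (Pr : V → Finset (Sym2 V)) (R : Set V) : Prop :=
  ∀ ρ ∈ R, ρ ≠ σ → ∀ p ∈ Pr ρ, ∃ v ∈ p, v ∈ R

/-- The orbit `HR` of a set `R` under a group action. -/
def orbitSet (H : Type*) [Group H] [MulAction H V] (R : Set V) : Set V :=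
  {x | ∃ h : H, ∃ ρ ∈ R, x = h • ρ}

/-- The geometric realization of the flag complex of `G` inside `ℝ^V`: the union over
all (nonempty) cliques of the convex hulls of the corresponding standard basis vectors. -/
def flagRealization [DecidableEq V] (G : SimpleGraph V) : Set (V → ℝ) :=
  ⋃ (Δ : Set V) (_ : Δ.Nonempty) (_ : G.IsClique Δ),
    convexHull ℝ ((fun v => (Pi.single v 1 : V → ℝ)) '' Δ)

/-- A walk is a geodesic if its length equals the distance between its endpoints. -/
def IsGeodesic (G : SimpleGraph V) {u v : V} (p : G.Walk u v) : Prop :=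
  p.length = G.dist u v

/-- `G` is `δ`-hyperbolic: for any geodesic triangle, each vertex on one side is within
distance `δ` of some vertex on the union of the other two sides. -/
def Hyperbolic (G : SimpleGraph V) (δ : ℕ) : Prop :=
  ∀ (u v w : V) (p : G.Walk u v) (q : G.Walk v w) (r : G.Walk w u),
    IsGeodesic G p → IsGeodesic G q → IsGeodesic G r →
    ∀ t ∈ p.support, ∃ s, (s ∈ q.support ∨ s ∈ r.support) ∧ G.dist t s ≤ δ

/-- The Rips graph `Γ_D`: same vertices, two distinct vertices adjacent iff their
graph distance in `G` is at most `D`. -/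
def ripsGraph (G : SimpleGraph V) (D : ℕ) : SimpleGraph V where
  Adj u v := u ≠ v ∧ G.dist u v ≤ D
  symm := by
    constructor
    intro u v h
    exact ⟨h.1.symm, by rw [SimpleGraph.dist_comm]; exact h.2⟩
  loopless := by
    constructor
    intro v h
    exact h.1 rfl

/-- The ball of radius `r` around a set `C` of vertices. -/
def ballSet (G : SimpleGraph V) (C : Set V) (r : ℕ) : Set V :=
  {v | ∃ c ∈ C, G.dist v c ≤ r}

open Pointwise

section Domination

variable {G : SimpleGraph V}

theorem mem_closedNbhd_iff {v w : V} : w ∈ closedNbhd G v ↔ w = v ∨ G.Adj v w := Iff.rfl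

theorem mem_closedNbhd_self (v : V) : v ∈ closedNbhd G v := Or.inl rfl

theorem mem_closedNbhd_comm {v w : V} : w ∈ closedNbhd G v ↔ v ∈ closedNbhd G w := by
  simp only [mem_closedNbhd_iff, eq_comm, G.adj_comm]

theorem DominatedIn.mono {S T : Set V} {ρ π : V} (h : DominatedIn G S ρ π) (hTS : T ⊆ S)
    (hπ : π ∈ T) : DominatedIn G T ρ π :=
  ⟨hπ, h.2.1, fun w hw => h.2.2 w (hTS hw)⟩

theorem DominatedIn.trans {S : Set V} {ρ π τ : V} (h₁ : DominatedIn G S ρ π)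
    (h₂ : DominatedIn G S π τ) (hτρ : τ ≠ ρ) : DominatedIn G S ρ τ :=
  ⟨h₂.1, hτρ, fun w hw hρ => h₂.2.2 w hw (h₁.2.2 w hw hρ)⟩

theorem DominatedIn.inter_subset {S : Set V} {ρ π : V} (h : DominatedIn G S ρ π) :
    closedNbhd G ρ ∩ S ⊆ closedNbhd G π ∩ S :=
  fun w hw => ⟨h.2.2 w hw.2 hw.1, hw.2⟩

theorem DominatedIn.erase [DecidableEq V] {S : Finset V} {ρ π a : V}
    (h : DominatedIn G S ρ π) (hπa : π ≠ a) : DominatedIn G ↑(S.erase a) ρ π :=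
  h.mono (Finset.coe_subset.2 (S.erase_subset a)) (Finset.mem_erase.2 ⟨hπa, h.1⟩)

theorem swap_mem_closedNbhd_swap_iff [DecidableEq V] {S : Set V} {a b x y : V}
    (hab : ∀ z ∈ S, z ∈ closedNbhd G a ↔ z ∈ closedNbhd G b) (hx : x ∈ S) (hy : y ∈ S) :
    Equiv.swap a b x ∈ closedNbhd G (Equiv.swap a b y) ↔ x ∈ closedNbhd G y := by
  have hxab := hab x hx
  have hyab := hab y hy
  rw [mem_closedNbhd_comm (w := y), mem_closedNbhd_comm (w := y)] at hyab
  rw [Equiv.swap_apply_def, Equiv.swap_apply_def]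
  split_ifs <;> grind [mem_closedNbhd_comm, mem_closedNbhd_self]

end Domination

section Dismantling

variable [DecidableEq V] {G : SimpleGraph V}

inductive IsDismantlable (G : SimpleGraph V) : Finset V → Prop
  | singleton (v : V) : IsDismantlable G {v}
  | of_erase {S : Finset V} {v u : V} (hv : v ∈ S) (hvu : DominatedIn G S v u) :
      IsDismantlable G (S.erase v) → IsDismantlable G S

namespace IsDismantlable

variable {S : Finset V}

theorem nonempty (hS : IsDismantlable G S) : S.Nonempty := by
  cases hS with
  | singleton v => exact Finset.singleton_nonempty v
  | of_erase hv => exact ⟨_, hv⟩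

theorem dismantlableOn (hS : IsDismantlable G S) : DismantlableOn G S := by
  induction hS with
  | singleton v => exact ⟨[v], List.nodup_singleton v, by simp, fun i _ hi => by simp at hi⟩
  | @of_erase S v u hv hvu _ ih =>
    obtain ⟨l, hnd, hl, hdom⟩ := ih
    have hvl : v ∉ l := fun h => by simpa using (hl v).1 h
    have hcons : {w | w ∈ v :: l} = (S : Set V) := by
      ext w
      by_cases hwv : w = v <;> simp [hl, hwv, hv]
    refine ⟨v :: l, List.nodup_cons.2 ⟨hvl, hnd⟩, fun w => Set.ext_iff.1 hcons w, ?_⟩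
    rintro (_ | i) h hi
    · exact ⟨u, by simpa only [List.drop_zero, List.getElem_cons_zero, hcons] using hvu⟩
    · simp only [List.length_cons, add_tsub_cancel_right] at h hi
      simpa using hdom i (by omega) (by omega)

theorem map_equiv (hS : IsDismantlable G S) (e : V ≃ V)
    (he : ∀ x ∈ S, ∀ y ∈ S, e x ∈ closedNbhd G (e y) ↔ x ∈ closedNbhd G y) :
    IsDismantlable G (S.map e.toEmbedding) := by
  induction hS with
  | singleton v => simpa using singleton (G := G) (e v)
  | @of_erase S v u hv hvu _ ih =>
    refine of_erase (Finset.mem_map_of_mem _ hv) (u := e u)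
      ⟨Finset.mem_map_of_mem _ hvu.1, e.injective.ne hvu.2.1, ?_⟩ ?_
    · intro w hw hwv
      obtain ⟨x, hx, rfl⟩ := Finset.mem_map.1 hw
      exact (he x hx u hvu.1).2 (hvu.2.2 x hx ((he x hx v hv).1 hwv))
    · rw [← Finset.map_erase]
      exact ih fun x hx y hy => he x (Finset.mem_of_mem_erase hx) y (Finset.mem_of_mem_erase hy)

theorem erase (hS : IsDismantlable G S) {v w : V} (hvw : DominatedIn G S v w) :
    IsDismantlable G (S.erase v) := by
  induction hS generalizing v w with
  | singleton a =>
    have hva : v ∉ ({a} : Finset V) := by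
      rintro h
      exact hvw.2.1 ((Finset.mem_singleton.1 hvw.1).trans (Finset.mem_singleton.1 h).symm)
    rw [Finset.erase_eq_of_notMem hva]
    exact singleton a
  | @of_erase S s u hs hsu hrest ih =>
    by_cases hvs : v = s
    · exact hvs ▸ hrest
    by_cases hvS : v ∈ S
    swap
    · rw [Finset.erase_eq_of_notMem hvS]
      exact of_erase hs hsu hrest
    by_cases htwin : w = s ∧ u = v
    · obtain ⟨hws, huv⟩ := htwin
      rw [hws] at hvw
      rw [huv] at hsu
      have hmap : (S.erase s).map (Equiv.swap s v).toEmbedding = S.erase v := by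
        rw [Finset.map_erase, Equiv.coe_toEmbedding, Equiv.swap_apply_left]
        congr 1
        ext x
        rw [Finset.mem_map_equiv, Equiv.symm_swap, Equiv.swap_apply_def]
        split_ifs <;> simp_all
      rw [← hmap]
      exact hrest.map_equiv _ fun x hx y hy => swap_mem_closedNbhd_swap_iff
        (fun z hz => ⟨hsu.2.2 z hz, hvw.2.2 z hz⟩) (Finset.mem_of_mem_erase hx)
        (Finset.mem_of_mem_erase hy)
    obtain ⟨w', hw'⟩ : ∃ w', DominatedIn G ↑(S.erase s) v w' := by
      by_cases hws : w = s
      · rw [hws] at hvw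
        exact ⟨u, (hvw.trans hsu fun h => htwin ⟨hws, h⟩).erase hsu.2.1⟩
      · exact ⟨w, hvw.erase hws⟩
    obtain ⟨u', hu'⟩ : ∃ u', DominatedIn G ↑(S.erase v) s u' := by
      by_cases huv : u = v
      · rw [huv] at hsu
        have hws : w ≠ s := fun h => htwin ⟨h, huv⟩
        exact ⟨w, (hsu.trans hvw hws).erase hvw.2.1⟩
      · exact ⟨u, hsu.erase huv⟩
    refine of_erase (Finset.mem_erase.2 ⟨Ne.symm hvs, hs⟩) hu' ?_
    rw [Finset.erase_right_comm]
    exact ih hw'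

theorem sdiff (hS : IsDismantlable G S) {Y : Finset V}
    (hY : ∀ y ∈ Y, ∃ u ∉ Y, DominatedIn G S y u) : IsDismantlable G (S \ Y) := by
  induction Y using Finset.induction_on with
  | empty => simpa using hS
  | insert y Y _ ih =>
    obtain ⟨u, huY, hyu⟩ := hY y (Finset.mem_insert_self y Y)
    rw [Finset.sdiff_insert]
    refine (ih fun z hz => ?_).erase (w := u) (hyu.mono (by simp) ?_)
    · obtain ⟨u', hu'Y, hzu'⟩ := hY z (Finset.mem_insert_of_mem hz)
      exact ⟨u', fun h => hu'Y (Finset.mem_insert_of_mem h), hzu'⟩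
    · exact Finset.mem_sdiff.2 ⟨hyu.1, fun h => huY (Finset.mem_insert_of_mem h)⟩

theorem isClique (hS : IsDismantlable G S)
    (hmax : ∀ x ∈ S, ∀ y ∈ S, closedNbhd G x ∩ S ⊆ closedNbhd G y ∩ S →
      closedNbhd G y ∩ S ⊆ closedNbhd G x ∩ S) : G.IsClique (S : Set V) := by
  induction hS with
  | singleton v => simp
  | @of_erase S s u hs hsu _ ih =>
    have hsu' := hsu.inter_subset
    have hus := hmax s hs u hsu.1 hsu'
    have huS' : u ∈ S.erase s := Finset.mem_erase.2 ⟨hsu.2.1, hsu.1⟩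
    have hcl : G.IsClique (S.erase s : Set V) := by
      refine ih fun x hx y hy hxy => ?_
      have hxS := Finset.mem_of_mem_erase hx
      have hyS := Finset.mem_of_mem_erase hy
      suffices h : closedNbhd G x ∩ S ⊆ closedNbhd G y ∩ S from
        fun w hw => ⟨(hmax x hxS y hyS h ⟨hw.1, Finset.mem_of_mem_erase hw.2⟩).1, hw.2⟩
      rintro w ⟨hwx, hwS⟩
      by_cases hws : w = s
      · rw [hws] at hwx ⊢
        -- `u`, a twin of `s` that survives in `S.erase s`, carries the adjacency from `x` to `y`
        have hux : u ∈ closedNbhd G x :=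
          mem_closedNbhd_comm.1 (hsu' ⟨mem_closedNbhd_comm.1 hwx, hxS⟩).1
        have hyu : y ∈ closedNbhd G u := mem_closedNbhd_comm.1 (hxy ⟨hux, huS'⟩).1
        exact ⟨mem_closedNbhd_comm.1 (hus ⟨hyu, hyS⟩).1, hs⟩
      · exact ⟨(hxy ⟨hwx, Finset.mem_erase.2 ⟨hws, hwS⟩⟩).1, hwS⟩
    rw [← Finset.insert_erase hs, Finset.coe_insert]
    refine SimpleGraph.isClique_insert.2 ⟨hcl, fun b hb hsb => ?_⟩
    have hbu : b ∈ closedNbhd G u := by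
      by_cases hbu : b = u
      · exact hbu ▸ mem_closedNbhd_self b
      · exact Or.inr (hcl huS' hb (Ne.symm hbu))
    exact (mem_closedNbhd_iff.1 (hus ⟨hbu, Finset.mem_of_mem_erase hb⟩).1).resolve_left
      (Ne.symm hsb)

end IsDismantlable

end Dismantling

section Projection

variable {G : SimpleGraph V} {σ : V} {Pr : V → Finset (Sym2 V)} {R : Set V}

def PiChild (σ : V) (Pr : V → Finset (Sym2 V)) (R : Set V) (b a : V) : Prop :=
  a ∈ R ∧ a ≠ σ ∧ b ∈ PiStar Pr a

def ChildDominated (G : SimpleGraph V) (Pr : V → Finset (Sym2 V)) (R : Set V) (S : Finset V) :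
    Prop :=
  ∀ π ∈ R, π ∉ S → ∃ d ∈ R, d ∈ PiStar Pr π ∧ ∀ w ∈ S, w ∈ closedNbhd G π → w ∈ closedNbhd G d

namespace IsSigmaProjection

theorem injective_of_descending (hPr : IsSigmaProjection G σ Pr) {f : ℕ → V}
    (hf : ∀ n, PiChild σ Pr R (f (n + 1)) (f n)) : f.Injective := by
  intro i j hij
  by_contra hne
  wlog hlt : i < j generalizing i j
  · exact this hij.symm (Ne.symm hne) (by omega)
  -- `f i, f (i + 1), …, f (j - 1)` is a cycle of length `j - i`
  have : NeZero (j - i) := ⟨by omega⟩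
  refine hPr.acyclic ⟨j - i, by omega, fun k => f (i + k.val), fun k => ⟨(hf _).2.1, ?_⟩⟩
  have hk : k.val < j - i := ZMod.val_lt k
  have hval : (k + 1).val = (k.val + 1) % (j - i) := by
    rw [ZMod.val_add, ZMod.val_one_eq_one_mod, Nat.add_mod_mod]
  have hnext : f (i + (k + 1).val) = f (i + k.val + 1) := by
    rcases (Nat.succ_le_of_lt hk).lt_or_eq with hlt' | heq
    · rw [hval, Nat.mod_eq_of_lt hlt', Nat.add_assoc]
    · rw [hval, ← Nat.succ_eq_add_one, heq, Nat.mod_self, Nat.add_zero, hij, Nat.add_assoc,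
        ← Nat.succ_eq_add_one, heq, Nat.add_sub_cancel' hlt.le]
  simpa only [hnext] using (hf (i + k.val)).2.2

theorem wellFounded (hPr : IsSigmaProjection G σ Pr) (hR : R.Finite) :
    WellFounded (PiChild σ Pr R) := by
  refine wellFounded_iff_isEmpty_descending_chain.2 ⟨fun ⟨f, hf⟩ => ?_⟩
  have : Finite R := hR.to_subtype
  exact not_injective_infinite_finite (fun n => (⟨f n, (hf n).1⟩ : R))
    fun i j h => hPr.injective_of_descending hf (congrArg Subtype.val h)

theorem mem_of_piConvex (hPr : IsSigmaProjection G σ Pr) (hR : R.Finite) (hne : R.Nonempty)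
    (hconv : PiConvex σ Pr R) : σ ∈ R := by
  obtain ⟨a, ha⟩ := hne
  induction a using (hPr.wellFounded hR).induction with
  | _ a ih =>
  by_contra hσ
  have haσ : a ≠ σ := fun h => hσ (h ▸ ha)
  obtain ⟨p, hp⟩ := hPr.nonempty a haσ
  obtain ⟨b, hbp, hbR⟩ := hconv a ha haσ p hp
  exact hσ (ih b ⟨ha, haσ, p, hp, hbp⟩ hbR)

theorem exists_mem_dominating (hPr : IsSigmaProjection G σ Pr) (hR : R.Finite) {S : Finset V}
    (hσS : σ ∈ S) (hS : ChildDominated G Pr R S)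
    {π : V} (hπ : π ∈ R) : ∃ d ∈ S, Relation.ReflTransGen (PiChild σ Pr R) d π ∧
      ∀ w ∈ S, w ∈ closedNbhd G π → w ∈ closedNbhd G d := by
  induction π using (hPr.wellFounded hR).induction with
  | _ π ih =>
  by_cases hπS : π ∈ S
  · exact ⟨π, hπS, .refl, fun _ _ => id⟩
  obtain ⟨d, hdR, hdπ, hπd⟩ := hS π hπ hπS
  have hπσ : π ≠ σ := fun h => hπS (h ▸ hσS)
  obtain ⟨e, heS, hed, hde⟩ := ih d ⟨hπ, hπσ, hdπ⟩ hdR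
  exact ⟨e, heS, hed.tail ⟨hπ, hπσ, hdπ⟩, fun w hw h => hde w hw (hπd w hw h)⟩

theorem isDismantlable_of_childDominated [DecidableEq V] (hPr : IsSigmaProjection G σ Pr)
    (hR : R.Finite) (hconv : PiConvex σ Pr R) {S : Finset V} (hSR : ↑S ⊆ R) (hσS : σ ∈ S)
    (hS : ChildDominated G Pr R S) : IsDismantlable G S := by
  induction S using Finset.strongInduction with
  | H S ih =>
  by_cases hex : ∃ ρ ∈ S, ρ ≠ σ
  swap
  · push Not at hex
    rw [Finset.eq_singleton_iff_unique_mem.2 ⟨hσS, hex⟩]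
    exact .singleton σ
  obtain ⟨ρ, hρS, hρσ, p, hp, hexp⟩ := hPr.exposed S hex
  have hρR : ρ ∈ R := hSR hρS
  obtain ⟨π, hπp, hπR⟩ := hconv ρ hρR hρσ p hp
  have hπρ : PiChild σ Pr R π ρ := ⟨hρR, hρσ, p, hp, hπp⟩
  obtain ⟨d, hdS, hdπ, hπd⟩ := hPr.exists_mem_dominating hR hσS hS hπR
  have hdρ : d ≠ ρ := by
    rintro rfl
    exact (hPr.wellFounded hR).transGen.irrefl.irrefl d (Relation.TransGen.tail' hdπ hπρ)
  refine .of_erase hρS ⟨hdS, hdρ, fun w hw h => hπd w hw (hexp π hπp w hw h)⟩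
    (ih _ (Finset.erase_ssubset hρS) (fun x hx => hSR (Finset.mem_of_mem_erase hx))
      (Finset.mem_erase.2 ⟨Ne.symm hρσ, hσS⟩) fun τ hτR hτ => ?_)
  by_cases hτρ : τ = ρ
  · subst hτρ
    exact ⟨π, hπR, ⟨p, hp, hπp⟩, fun w hw => hexp π hπp w (Finset.mem_of_mem_erase hw)⟩
  obtain ⟨d', hd'R, hd'τ, hτd'⟩ := hS τ hτR fun h => hτ (Finset.mem_erase.2 ⟨hτρ, h⟩)
  exact ⟨d', hd'R, hd'τ, fun w hw => hτd' w (Finset.mem_of_mem_erase hw)⟩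

end IsSigmaProjection

end Projection

section InvariantClique

variable {G : SimpleGraph V} {S : Finset V}

open Classical in
noncomputable def strictlyDominated (G : SimpleGraph V) (S : Finset V) : Finset V :=
  {x ∈ S | ∃ y ∈ S, closedNbhd G x ∩ S ⊂ closedNbhd G y ∩ S}

theorem mem_strictlyDominated {x : V} : x ∈ strictlyDominated G S ↔
    x ∈ S ∧ ∃ y ∈ S, closedNbhd G x ∩ S ⊂ closedNbhd G y ∩ S := by
  classical
  simp [strictlyDominated]

theorem strictlyDominated_subset : strictlyDominated G S ⊆ S :=
  fun _ hx => (mem_strictlyDominated.1 hx).1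

theorem exists_dominatedIn_notMem_strictlyDominated {x : V} (hx : x ∈ strictlyDominated G S) :
    ∃ u ∉ strictlyDominated G S, DominatedIn G S x u := by
  obtain ⟨hxS, -⟩ := mem_strictlyDominated.1 hx
  obtain ⟨u, ⟨huS, hxu⟩, humax⟩ := Set.Finite.exists_maximalFor (fun y => closedNbhd G y ∩ S)
    {y | y ∈ S ∧ closedNbhd G x ∩ S ⊆ closedNbhd G y ∩ S}
    (S.finite_toSet.subset fun y hy => hy.1) ⟨x, hxS, subset_rfl⟩
  have hu : u ∉ strictlyDominated G S := fun hu => by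
    obtain ⟨-, z, hzS, huz⟩ := mem_strictlyDominated.1 hu
    exact huz.2 (humax ⟨hzS, hxu.trans huz.1⟩ huz.1)
  exact ⟨u, hu, huS, fun h => hu (h ▸ hx), fun w hw hwx => (hxu ⟨hwx, hw⟩).1⟩

variable {H : Type*} [Group H] [MulAction H V]

theorem closedNbhd_smul (hact : ∀ (h : H) (u v : V), G.Adj (h • u) (h • v) ↔ G.Adj u v)
    (h : H) (x : V) : closedNbhd G (h • x) = h • closedNbhd G x := by
  ext w
  rw [Set.mem_smul_set_iff_inv_smul_mem, mem_closedNbhd_iff, mem_closedNbhd_iff,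
    ← hact h x, smul_inv_smul, inv_smul_eq_iff]

theorem smul_mem_strictlyDominated
    (hact : ∀ (h : H) (u v : V), G.Adj (h • u) (h • v) ↔ G.Adj u v)
    (hS : ∀ h : H, h • (S : Set V) = S) (h : H) {x : V}
    (hx : x ∈ strictlyDominated G S) : h • x ∈ strictlyDominated G S := by
  obtain ⟨hxS, y, hyS, hxy⟩ := mem_strictlyDominated.1 hx
  have hsmul : ∀ z, closedNbhd G (h • z) ∩ S = h • (closedNbhd G z ∩ S) := fun z => by
    rw [closedNbhd_smul hact, Set.smul_set_inter, hS h]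
  have hmem : ∀ z ∈ S, h • z ∈ S := fun z hz => by
    rw [← Finset.mem_coe, ← hS h]
    exact Set.smul_mem_smul_set hz
  refine mem_strictlyDominated.2 ⟨hmem x hxS, h • y, hmem y hyS, ?_⟩
  rw [hsmul, hsmul]
  exact (MulAction.injective h).image_strictMono hxy

theorem smul_strictlyDominated
    (hact : ∀ (h : H) (u v : V), G.Adj (h • u) (h • v) ↔ G.Adj u v)
    (hS : ∀ h : H, h • (S : Set V) = S) (h : H) :
    h • (strictlyDominated G S : Set V) = strictlyDominated G S := by
  refine (Set.smul_set_subset_iff.2 fun x hx =>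
    smul_mem_strictlyDominated hact hS h hx).antisymm ?_
  rw [Set.subset_smul_set_iff]
  exact Set.smul_set_subset_iff.2 fun x hx => smul_mem_strictlyDominated hact hS h⁻¹ hx

variable [DecidableEq V]

theorem IsDismantlable.isClique_of_strictlyDominated_eq_empty (hS : IsDismantlable G S)
    (hX : strictlyDominated G S = ∅) : G.IsClique (S : Set V) :=
  hS.isClique fun x hx y hy hxy => by
    by_contra h
    have : x ∈ strictlyDominated G S := mem_strictlyDominated.2 ⟨hx, y, hy, hxy, h⟩
    simp [hX] at this

theorem IsDismantlable.exists_isClique_smul_eq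
    (hact : ∀ (h : H) (u v : V), G.Adj (h • u) (h • v) ↔ G.Adj u v) (hS : IsDismantlable G S)
    (hinv : ∀ h : H, h • (S : Set V) = S) :
    ∃ Δ : Set V, Δ.Nonempty ∧ G.IsClique Δ ∧ ∀ h : H, h • Δ = Δ := by
  induction S using Finset.strongInduction with
  | H S ih =>
  by_cases hX : strictlyDominated G S = ∅
  · exact ⟨S, hS.nonempty, hS.isClique_of_strictlyDominated_eq_empty hX, hinv⟩
  refine ih _ (Finset.sdiff_ssubset strictlyDominated_subset
    (Finset.nonempty_iff_ne_empty.2 hX)) (hS.sdiff fun x hx =>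
      exists_dominatedIn_notMem_strictlyDominated hx) fun h => ?_
  rw [Finset.coe_sdiff, Set.smul_set_sdiff, hinv h, smul_strictlyDominated hact hinv h]

end InvariantClique

/-- Let `H` be a group acting on `Γ` by automorphisms. If there is a
`σ`-projection `Π_σ` and a nonempty finite `Π_σ`-convex `H`-invariant set `R`, then the
subgraph induced on `R` is dismantlable and `Γ` contains an `H`-invariant clique. -/
theorem invariant_clique_of_invariant_convex {V : Type*} {H : Type*} [Group H] [MulAction H V]
    (G : SimpleGraph V) (hact : ∀ (h : H) (u v : V), G.Adj (h • u) (h • v) ↔ G.Adj u v)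
    (σ : V) (Pr : V → Finset (Sym2 V)) (hPr : IsSigmaProjection G σ Pr)
    (R : Set V) (hfin : R.Finite) (hne : R.Nonempty) (hconv : PiConvex σ Pr R)
    (hinv : ∀ h : H, (fun v => h • v) '' R = R) :
    DismantlableOn G R ∧
      ∃ Δ : Set V, Δ.Nonempty ∧ G.IsClique Δ ∧ ∀ h : H, (fun v => h • v) '' Δ = Δ := by
  classical
  have hσ : σ ∈ R := hPr.mem_of_piConvex hfin hne hconv
  have hdis : IsDismantlable G hfin.toFinset :=
    hPr.isDismantlable_of_childDominated hfin hconv (by simp) (by simpa using hσ)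
      fun π hπ hπS => absurd (hfin.mem_toFinset.2 hπ) hπS
  simp only [Set.image_smul] at hinv ⊢
  refine ⟨by simpa using hdis.dismantlableOn, hdis.exists_isClique_smul_eq hact ?_⟩
  simpa using hinv
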